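/- arXiv:1208.4141 — 3 statements merged into one kernel-verified Lean document; each statement's English description precedes it below -/
import Mathlib

section
/- Let E be a directed graph whose only hereditary and saturated subsets of E^0 are ∅ and E^0, and suppose α is a closed path in E with no exit. Then every closed path β in E has the same vertex set as α, i.e., β^0 = α^0. -/
/-- A directed graph `E = (E⁰, E¹, r, s)`: `V` is the vertex set `E⁰`, `Edg` is the
edge set `E¹`, and `s`, `r` give the source and range of each edge. -/
structure DGraph (V : Type*) (Edg : Type*) where
  s : Edg → V
  r : Edg → V

namespace DGraph

variable {V Edg : Type*}

/-- There is an edge from `v` to `w`. -/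
def Adj (G : DGraph V Edg) (v w : V) : Prop := ∃ e, G.s e = v ∧ G.r e = w

/-- There is a path (possibly of length zero, i.e. a vertex) from `v` to `w`. -/
def Reaches (G : DGraph V Edg) : V → V → Prop := Relation.ReflTransGen G.Adj

/-- A subset `X ⊆ E⁰` is hereditary if `r(e) ∈ X` whenever `s(e) ∈ X`. -/
def Hereditary (G : DGraph V Edg) (X : Set V) : Prop := ∀ e, G.s e ∈ X → G.r e ∈ X

/-- A vertex is a finite emitter if `s⁻¹(v)` is finite and nonempty. -/
def FiniteEmitter (G : DGraph V Edg) (v : V) : Prop :=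
  {e | G.s e = v}.Finite ∧ {e | G.s e = v}.Nonempty

/-- A subset `X ⊆ E⁰` is saturated if every finite emitter `v` with
`r(s⁻¹(v)) ⊆ X` lies in `X`. -/
def Saturated (G : DGraph V Edg) (X : Set V) : Prop :=
  ∀ v, FiniteEmitter G v → (∀ e, G.s e = v → G.r e ∈ X) → v ∈ X

/-- The hereditary saturated closure of `X`: the smallest hereditary and saturated
subset of `E⁰` containing `X`. -/
def satClosure (G : DGraph V Edg) (X : Set V) : Set V :=
  ⋂₀ {Y | Hereditary G Y ∧ Saturated G Y ∧ X ⊆ Y}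

/-- The consecutive edges of a path match up: `r(eᵢ) = s(eᵢ₊₁)`. -/
def IsChain (G : DGraph V Edg) (p : List Edg) : Prop :=
  List.Chain' (fun e f => G.r e = G.s f) p

/-- `p` is a closed path (of length ≥ 1) based at `v`. -/
def IsClosedPathAt (G : DGraph V Edg) (p : List Edg) (v : V) : Prop :=
  ∃ hne : p ≠ [], IsChain G p ∧ G.s (p.head hne) = v ∧ G.r (p.getLast hne) = v

/-- `p` is a closed path (of length ≥ 1). -/
def IsClosedPath (G : DGraph V Edg) (p : List Edg) : Prop := ∃ v, IsClosedPathAt G p v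

/-- The vertex set `α⁰ = {s(e₁), …, s(eₙ)}` of a path. -/
def pathVerts (G : DGraph V Edg) (p : List Edg) : Set V := {w | ∃ e ∈ p, G.s e = w}

/-- An exit of a closed path `e₁⋯eₙ` is an edge `f` with `s(f) = s(eᵢ)` and
`f ≠ eᵢ` for some `i`. -/
def IsExitOf (G : DGraph V Edg) (f : Edg) (p : List Edg) : Prop :=
  ∃ e ∈ p, G.s f = G.s e ∧ f ≠ e

/-- `p` is a simple closed path based at `v`: a closed path whose sources are
pairwise distinct. -/
def IsSimpleClosedPathAt (G : DGraph V Edg) (p : List Edg) (v : V) : Prop :=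
  IsClosedPathAt G p v ∧ (p.map G.s).Nodup

end DGraph

/-!
The set of vertices from which no vertex of `β` can be reached is hereditary and saturated,
and it misses `β⁰`, so it is empty: every vertex reaches `β⁰`. As `α` has no exit, `α⁰` is
hereditary, i.e. closed under reachability; it therefore contains a vertex of `β` and with it
all of `β⁰`, since the vertices of a closed path reach one another. Then every edge of `β` is the
unique edge of `α` at its source, so `β` has no exit either, and the same argument with the roles
exchanged gives `α⁰ ⊆ β⁰`.
-/

namespace DGraph

variable {V Edg : Type*} {G : DGraph V Edg}

theorem Hereditary.mem_of_reaches {X : Set V} (hX : G.Hereditary X) {u w : V} (hu : u ∈ X)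
    (h : G.Reaches u w) : w ∈ X := by
  induction h with
  | refl => exact hu
  | tail _ hadj ih =>
    obtain ⟨e, rfl, rfl⟩ := hadj
    exact hX e ih

section ClosedPath

variable {p : List Edg} {v : V}

theorem IsClosedPathAt.mem_pathVerts (hp : G.IsClosedPathAt p v) : v ∈ G.pathVerts p :=
  ⟨p.head hp.1, List.head_mem hp.1, hp.2.2.1⟩

theorem IsClosedPathAt.reaches_src (hp : G.IsClosedPathAt p v) :
    ∀ e ∈ p, G.Reaches v (G.s e) := by
  obtain ⟨hne, hc, hs, -⟩ := hp
  refine List.IsChain.induction (fun e => G.Reaches v (G.s e)) p hc ?_ ?_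
  · intro e f hef h
    exact h.tail ⟨e, rfl, hef⟩
  · exact fun _ => hs ▸ .refl

theorem IsClosedPathAt.src_reaches (hp : G.IsClosedPathAt p v) :
    ∀ e ∈ p, G.Reaches (G.s e) v := by
  obtain ⟨hne, hc, -, hr⟩ := hp
  refine List.IsChain.backwards_induction (fun e => G.Reaches (G.s e) v) p hc ?_ ?_
  · intro e f hef h
    exact h.head ⟨e, rfl, hef⟩
  · exact fun _ => .single ⟨_, rfl, hr⟩

theorem IsClosedPathAt.reaches_of_mem (hp : G.IsClosedPathAt p v) {a b : V}
    (ha : a ∈ G.pathVerts p) (hb : b ∈ G.pathVerts p) : G.Reaches a b := by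
  obtain ⟨e, he, rfl⟩ := ha
  obtain ⟨f, hf, rfl⟩ := hb
  exact (hp.src_reaches e he).trans (hp.reaches_src f hf)

theorem IsClosedPathAt.r_mem_pathVerts (hp : G.IsClosedPathAt p v) {e : Edg} (he : e ∈ p) :
    G.r e ∈ G.pathVerts p := by
  have hv := hp.mem_pathVerts
  obtain ⟨hne, hc, -, hr⟩ := hp
  obtain ⟨i, hi, rfl⟩ := List.getElem_of_mem he
  by_cases hlast : i + 1 < p.length
  · exact ⟨p[i + 1], List.getElem_mem hlast, (hc.getElem i hlast).symm⟩
  · have : p[i] = p.getLast hne := by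
      rw [List.getLast_eq_getElem]
      congr
      omega
    rwa [this, hr]

theorem IsClosedPathAt.pathVerts_subset (hp : G.IsClosedPathAt p v) {X : Set V}
    (hX : G.Hereditary X) {a : V} (ha : a ∈ G.pathVerts p) (haX : a ∈ X) :
    G.pathVerts p ⊆ X := fun _ hb => hX.mem_of_reaches haX (hp.reaches_of_mem ha hb)

theorem IsClosedPathAt.hereditary_pathVerts (hp : G.IsClosedPathAt p v)
    (hnoexit : ∀ f, ¬ G.IsExitOf f p) : G.Hereditary (G.pathVerts p) := by
  rintro f ⟨e, he, hsf⟩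
  have : f = e := by
    by_contra hfe
    exact hnoexit f ⟨e, he, hsf.symm, hfe⟩
  exact this ▸ hp.r_mem_pathVerts he

end ClosedPath

theorem forall_not_isExitOf_of_pathVerts_subset {p q : List Edg}
    (hnoexit : ∀ f, ¬ G.IsExitOf f p) (hqp : G.pathVerts q ⊆ G.pathVerts p) :
    ∀ f, ¬ G.IsExitOf f q := by
  rintro f ⟨e, he, hsf, hfe⟩
  obtain ⟨a, ha, hsa⟩ := hqp ⟨e, he, rfl⟩
  have edge_eq (g : Edg) (hg : G.s g = G.s a) : g = a := by
    by_contra hga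
    exact hnoexit g ⟨a, ha, hg, hga⟩
  exact hfe ((edge_eq f (hsf.trans hsa.symm)).trans (edge_eq e hsa.symm).symm)

section NotReaching

variable {S : Set V}

theorem hereditary_setOf_forall_not_reaches :
    G.Hereditary {u | ∀ w ∈ S, ¬ G.Reaches u w} :=
  fun e he w hw hreach => he w hw (hreach.head ⟨e, rfl, rfl⟩)

theorem saturated_setOf_forall_not_reaches (hS : ∀ w ∈ S, ∃ e, G.s e = w ∧ G.r e ∈ S) :
    G.Saturated {u | ∀ w ∈ S, ¬ G.Reaches u w} := by
  intro u _ hout w hw hreach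
  rcases hreach.cases_head with rfl | ⟨c, ⟨e, hse, rfl⟩, hreach'⟩
  · obtain ⟨e, hse, hre⟩ := hS u hw
    exact hout e hse _ hre .refl
  · exact hout e hse w hw hreach'

theorem exists_mem_reaches_of_forall_trivial
    (htriv : ∀ X : Set V, G.Hereditary X → G.Saturated X → X = ∅ ∨ X = Set.univ)
    (hne : S.Nonempty) (hS : ∀ w ∈ S, ∃ e, G.s e = w ∧ G.r e ∈ S) (u : V) :
    ∃ w ∈ S, G.Reaches u w := by
  obtain ⟨w₀, hw₀⟩ := hne
  rcases htriv _ hereditary_setOf_forall_not_reaches (saturated_setOf_forall_not_reaches hS) with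
    h | h
  · by_contra! hu
    exact (Set.eq_empty_iff_forall_notMem.mp h) u hu
  · exact absurd .refl ((Set.eq_univ_iff_forall.mp h w₀) w₀ hw₀)

end NotReaching

end DGraph

/-- if the only hereditary and saturated subsets of `E⁰` are `∅` and
`E⁰`, and `α` is a closed path with no exit, then every closed path `β` has the
same vertex set as `α`. -/
theorem stmt4 {V Edg : Type*} (G : DGraph V Edg)
    (htriv : ∀ X : Set V, G.Hereditary X → G.Saturated X → X = ∅ ∨ X = Set.univ)
    (α : List Edg) (hα : G.IsClosedPath α) (hnoexit : ∀ f, ¬ G.IsExitOf f α)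
    (β : List Edg) (hβ : G.IsClosedPath β) :
    G.pathVerts β = G.pathVerts α := by
  obtain ⟨v, hαv⟩ := hα
  obtain ⟨u, hβu⟩ := hβ
  have hβ_out : ∀ w ∈ G.pathVerts β, ∃ e, G.s e = w ∧ G.r e ∈ G.pathVerts β :=
    fun _ ⟨e, he, hse⟩ => ⟨e, hse, hβu.r_mem_pathVerts he⟩
  obtain ⟨w, hwβ, hvw⟩ :=
    DGraph.exists_mem_reaches_of_forall_trivial htriv ⟨u, hβu.mem_pathVerts⟩ hβ_out v
  have hαher := hαv.hereditary_pathVerts hnoexit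
  have hwα : w ∈ G.pathVerts α := hαher.mem_of_reaches hαv.mem_pathVerts hvw
  have hβα : G.pathVerts β ⊆ G.pathVerts α := hβu.pathVerts_subset hαher hwβ hwα
  have hβher :=
    hβu.hereditary_pathVerts (DGraph.forall_not_isExitOf_of_pathVerts_subset hnoexit hβα)
  exact hβα.antisymm (hαv.pathVerts_subset hβher hwα hwβ)
end

section
/- Let E be a directed graph whose only hereditary and saturated subsets of E^0 are ∅ and E^0. If v ∈ E^0 is an infinite emitter, then for every edge e with s(e) = v there exists a path from r(e) to v. In particular, v lies on a closed path whose first edge is e, for each edge e emitted by v. -/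
/-! If the graph has only trivial hereditary saturated subsets, the set of vertices that do not
reach `v` is hereditary, and saturated as soon as `v` is not a finite emitter; it misses `v`,
so it is empty. Prefixing `e` to a path from `r(e)` to `v = s(e)` closes it up. -/

namespace DGraph

variable {V Edg : Type*} (G : DGraph V Edg)

theorem hereditary_setOf_not_reaches (v : V) : G.Hereditary {w | ¬ G.Reaches w v} :=
  fun e he hr => he (.head ⟨e, rfl, rfl⟩ hr)

theorem saturated_setOf_not_reaches {v : V} (hv : ¬ G.FiniteEmitter v) :
    G.Saturated {w | ¬ G.Reaches w v} := by
  intro w hw hout hwv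
  rcases Relation.ReflTransGen.cases_head hwv with rfl | ⟨c, ⟨f, hf, rfl⟩, hc⟩
  · exact hv hw
  · exact hout f hf hc

theorem reaches_of_hereditary_saturated_trivial
    (htriv : ∀ X : Set V, G.Hereditary X → G.Saturated X → X = ∅ ∨ X = Set.univ)
    {v : V} (hv : ¬ G.FiniteEmitter v) (w : V) : G.Reaches w v := by
  rcases htriv _ (G.hereditary_setOf_not_reaches v) (G.saturated_setOf_not_reaches hv) with
    h | h
  · exact not_not.1 (Set.eq_empty_iff_forall_notMem.1 h w)
  · exact (Set.eq_univ_iff_forall.1 h v .refl).elim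

theorem exists_isChain_cons_of_reaches {a b : V} (h : G.Reaches a b) {e : Edg} (he : G.r e = a) :
    ∃ q : List Edg, G.IsChain (e :: q) ∧ G.r ((e :: q).getLast (List.cons_ne_nil e q)) = b := by
  induction h using Relation.ReflTransGen.head_induction_on generalizing e with
  | refl => exact ⟨[], List.isChain_singleton e, he⟩
  | head hadj _ ih =>
    obtain ⟨f, hfs, hfr⟩ := hadj
    obtain ⟨q, hq, hlast⟩ := ih hfr
    exact ⟨f :: q, List.isChain_cons_cons.2 ⟨he.trans hfs.symm, hq⟩, hlast⟩

end DGraph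

/-- if the only hereditary and saturated subsets of `E⁰` are `∅` and
`E⁰` and `v` is an infinite emitter, then for every edge `e` with `s(e) = v` there
is a path from `r(e)` to `v`; in particular, `v` lies on a closed path whose first
edge is `e`, for each edge `e` emitted by `v`. -/
theorem stmt5 {V Edg : Type*} (G : DGraph V Edg)
    (htriv : ∀ X : Set V, G.Hereditary X → G.Saturated X → X = ∅ ∨ X = Set.univ)
    (v : V) (hv : {e | G.s e = v}.Infinite) :
    ∀ e, G.s e = v → G.Reaches (G.r e) v ∧
      ∃ (p : List Edg) (hne : p ≠ []), G.IsClosedPathAt p v ∧ p.head hne = e := by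
  intro e he
  have hre : G.Reaches (G.r e) v :=
    G.reaches_of_hereditary_saturated_trivial htriv (fun hfin => hv hfin.1) _
  obtain ⟨q, hq, hlast⟩ := G.exists_isChain_cons_of_reaches hre rfl
  exact ⟨hre, e :: q, List.cons_ne_nil e q, ⟨List.cons_ne_nil e q, hq, he, hlast⟩, rfl⟩
end

section
/- Let E be a directed graph, let α = e_1⋯e_n be a closed path in E with vertex set α^0 = {s(e_1), …, s(e_n)}, and let D := {r(f) : f is an exit of α}. Suppose there is no path from any vertex of D to a vertex of α^0. Then the hereditary saturated closure X := \overline{D} satisfies X ∩ α^0 = ∅, and every exit f of α has r(f) ∈ X; consequently, in the restricted graph with vertices E^0 \ X and edges {e ∈ E^1 : r(e) ∉ X}, α is a closed path with no exit. -/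
/-!
Let `Y` be the set of vertices from which no vertex of `α⁰` can be reached. It contains `D` by
hypothesis, it is hereditary, and it is saturated because every vertex of `α⁰` emits an edge of
`α` whose range lies again in `α⁰`. Hence `Y` contains the closure `X` of `D`, while `Y` misses
`α⁰`; the remaining claims are then immediate.
-/

namespace DGraph

variable {V Edg : Type*} (G : DGraph V Edg)

theorem subset_satClosure (X : Set V) : X ⊆ G.satClosure X :=
  fun _ hw _ hY => hY.2.2 hw

theorem satClosure_subset {X Y : Set V} (hher : G.Hereditary Y) (hsat : G.Saturated Y)
    (hXY : X ⊆ Y) : G.satClosure X ⊆ Y :=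
  fun _ hw => hw Y ⟨hher, hsat, hXY⟩

theorem hereditary_setOf_not_reaches_s17 (S : Set V) :
    G.Hereditary {w | ∀ u ∈ S, ¬ G.Reaches w u} :=
  fun e hs u hu hreach => hs u hu (Relation.ReflTransGen.head ⟨e, rfl, rfl⟩ hreach)

theorem saturated_setOf_not_reaches_s17 {S : Set V}
    (hS : ∀ u ∈ S, ∃ e, G.s e = u ∧ G.r e ∈ S) :
    G.Saturated {w | ∀ u ∈ S, ¬ G.Reaches w u} := by
  intro w _ hall u hu hreach
  rcases Relation.ReflTransGen.cases_head hreach with rfl | ⟨c, ⟨e, hse, rfl⟩, hcu⟩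
  · obtain ⟨e, hse, hre⟩ := hS w hu
    exact hall e hse _ hre Relation.ReflTransGen.refl
  · exact hall e hse u hu hcu

variable {G}

theorem IsClosedPathAt.range_mem_pathVerts {α : List Edg} {v : V}
    (hα : G.IsClosedPathAt α v) {e : Edg} (he : e ∈ α) : G.r e ∈ G.pathVerts α := by
  obtain ⟨hne, hchain, hhead, hlast⟩ := hα
  obtain ⟨i, hi, rfl⟩ := List.getElem_of_mem he
  by_cases hnext : i + 1 < α.length
  · exact ⟨α[i + 1], List.getElem_mem _, (List.IsChain.getElem hchain i hnext).symm⟩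
  · have hi_last : α[i] = α.getLast hne := by
      rw [List.getLast_eq_getElem]
      congr 1
      omega
    exact ⟨α.head hne, List.head_mem hne, by rw [hhead, hi_last, hlast]⟩

theorem IsClosedPathAt.exists_edge_range_mem_pathVerts {α : List Edg} {v : V}
    (hα : G.IsClosedPathAt α v) :
    ∀ u ∈ G.pathVerts α, ∃ e, G.s e = u ∧ G.r e ∈ G.pathVerts α :=
  fun _ ⟨e, he, hse⟩ => ⟨e, hse, hα.range_mem_pathVerts he⟩

theorem IsClosedPathAt.satClosure_subset_setOf_not_reaches {α : List Edg} {v : V}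
    (hα : G.IsClosedPathAt α v) {D : Set V}
    (hD : ∀ w ∈ D, ∀ u ∈ G.pathVerts α, ¬ G.Reaches w u) :
    G.satClosure D ⊆ {w | ∀ u ∈ G.pathVerts α, ¬ G.Reaches w u} :=
  G.satClosure_subset (G.hereditary_setOf_not_reaches_s17 _)
    (G.saturated_setOf_not_reaches_s17 hα.exists_edge_range_mem_pathVerts) hD

end DGraph

/-- let `α` be a closed path, let `D = {r(f) : f an exit of α}`, and
suppose there is no path from any vertex of `D` to a vertex of `α⁰`. Then the
hereditary saturated closure `X` of `D` is disjoint from `α⁰`, every exit `f` of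
`α` has `r(f) ∈ X`; consequently in the restricted graph with vertices `E⁰ \ X`
and edges `{e : r(e) ∉ X}`, `α` is a closed path (all its edges survive) with no
exit. -/
theorem stmt17 {V Edg : Type*} (G : DGraph V Edg) (α : List Edg) (v : V)
    (hα : G.IsClosedPathAt α v)
    (hD : ∀ w ∈ {w | ∃ f, G.IsExitOf f α ∧ G.r f = w},
      ∀ u ∈ G.pathVerts α, ¬ G.Reaches w u) :
    G.satClosure {w | ∃ f, G.IsExitOf f α ∧ G.r f = w} ∩ G.pathVerts α = ∅ ∧
    (∀ f, G.IsExitOf f α → G.r f ∈ G.satClosure {w | ∃ f, G.IsExitOf f α ∧ G.r f = w}) ∧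
    (∀ e ∈ α, G.r e ∉ G.satClosure {w | ∃ f, G.IsExitOf f α ∧ G.r f = w}) ∧
    (∀ f, G.r f ∉ G.satClosure {w | ∃ f, G.IsExitOf f α ∧ G.r f = w} →
      ¬ G.IsExitOf f α) := by
  set D : Set V := {w | ∃ f, G.IsExitOf f α ∧ G.r f = w}
  have hX_not_reaches := hα.satClosure_subset_setOf_not_reaches hD
  have hdisj : ∀ u ∈ G.pathVerts α, u ∉ G.satClosure D :=
    fun u hu hX => hX_not_reaches hX u hu Relation.ReflTransGen.refl
  have hexit : ∀ f, G.IsExitOf f α → G.r f ∈ G.satClosure D :=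
    fun f hf => G.subset_satClosure D ⟨f, hf, rfl⟩
  refine ⟨?_, hexit, fun e he => hdisj _ (hα.range_mem_pathVerts he),
    fun f hX hf => hX (hexit f hf)⟩
  exact Set.eq_empty_of_forall_notMem fun u ⟨hX, hu⟩ => hdisj u hu hX
end
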